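/- arXiv:2108.11279 — 3 statements merged into one kernel-verified Lean document; each statement's English description precedes it below -/
import Mathlib

section
/- Let G = (A, φ, w) be a D0L-system with non-erasing morphism φ and let H = (A, φ, w, Ψ) be an HD0L-system over it. If the language L_G is uniformly recurrent and L_H contains an infinite repetition v^ω (i.e., a primitive word v with v^k ∈ L_H for all k), then L_H equals the set of all factors of the periodic infinite word v^ω = vvv⋯. -/
/-- The extension of the morphism given by `φ` on letters to a morphism on words. -/
def extM {A B : Type*} (φ : A → List B) (w : List A) : List B := w.flatMap φ

/-- The `k`-th power `u^k` of a word `u`. -/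
def wpow {A : Type*} (u : List A) (k : ℕ) : List A := (List.replicate k u).flatten

/-- A word `v` is primitive if `v = u^k` implies `k = 1`. -/
def Primitive {A : Type*} (v : List A) : Prop :=
  v ≠ [] ∧ ∀ (u : List A) (k : ℕ), v = wpow u k → k = 1

/-- The language of the D0L-system `(A, φ, w)`: all factors of the words `φ^n(w)`. -/
def LangD0L {A : Type*} (φ : A → List A) (w : List A) : Set (List A) :=
  {v | ∃ n : ℕ, v <:+: (extM φ)^[n] w}

/-- `fact(Ψ(L))`: all factors of `Ψ`-images of elements of `L`. -/
def factImg {A B : Type*} (Ψ : A → List B) (L : Set (List A)) : Set (List B) :=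
  {v | ∃ u ∈ L, v <:+: extM Ψ u}

/-- The language of the HD0L-system `(A, φ, w, Ψ)`. -/
def LangHD0L {A B : Type*} (φ : A → List A) (w : List A) (Ψ : A → List B) : Set (List B) :=
  factImg Ψ (LangD0L φ w)

/-- A morphism is non-erasing if no letter is mapped to the empty word. -/
def NonErasing {A B : Type*} (φ : A → List B) : Prop := ∀ a, φ a ≠ []

/-- A letter `b` is bounded (w.r.t. `φ`) if the lengths `|φ^n(b)|` are bounded. -/
def BddLetter {A : Type*} (φ : A → List A) (b : A) : Prop :=
  ∃ C : ℕ, ∀ n : ℕ, ((extM φ)^[n] [b]).length ≤ C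

/-- The set of letters occurring in a word. -/
def alph {A : Type*} (u : List A) : Set A := {a | a ∈ u}

/-- `alph(φ(S))` for a set of letters `S`: letters occurring in `φ(b)` for some `b ∈ S`. -/
def alphIm {A : Type*} (φ : A → List A) (S : Set A) : Set A := ⋃ b ∈ S, alph (φ b)

/-- A D0L-system is pushy if its language contains infinitely many words over bounded letters. -/
def Pushy {A : Type*} (φ : A → List A) (w : List A) : Prop :=
  {v ∈ LangD0L φ w | ∀ a ∈ v, BddLetter φ a}.Infinite

/-- A factorial language `L` is uniformly recurrent: for every `n` there is `K` such that
every element of `L` of length `K` contains every element of `L` of length `n` as a factor. -/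
def UnifRec {A : Type*} (L : Set (List A)) : Prop :=
  ∀ n : ℕ, ∃ K : ℕ, ∀ u ∈ L, u.length = K → ∀ v ∈ L, v.length = n → v <:+: u

/-- Vertices of the tree of invariant subalphabets of `φ`: nonempty sets `S` with
`alph(φ(S)) = S` containing an unbounded letter `a` with `alph(φ(a)) = S`. -/
def IsVertex {A : Type*} (φ : A → List A) (S : Set A) : Prop :=
  S.Nonempty ∧ alphIm φ S = S ∧ ∃ a ∈ S, ¬ BddLetter φ a ∧ alph (φ a) = S

/-- Leaves of the tree of invariant subalphabets: minimal vertices w.r.t. inclusion. -/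
def IsLeaf {A : Type*} (φ : A → List A) (S : Set A) : Prop :=
  IsVertex φ S ∧ ∀ T, IsVertex φ T → T ⊆ S → T = S

/-- Two words are conjugate: `u = xy` and `v = yx`. -/
def Conj {A : Type*} (u v : List A) : Prop := ∃ x y : List A, u = x ++ y ∧ v = y ++ x

/-- The prefix of length `n` of an infinite word. -/
def prefW {A : Type*} (w : ℕ → A) (n : ℕ) : List A := (List.range n).map w

/-!
Every word `u` of `L_H` is a factor of `Ψ(x)` for some `x ∈ L_G`. A long factor `t` of some
`Ψ(y)`, `y ∈ L_G`, contains `Ψ(z)` for a factor `z` of `y` with `|t| ≤ C (|z| + 2)`, where `C`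
bounds the lengths `|Ψ(a)|`; by uniform recurrence of `L_G`, `z` contains `x` once `t` is long
enough, so `u` is a factor of every sufficiently long word of `L_H`. Applied to the words `v^k`,
this puts `u` inside some `v^k`; conversely every factor of `v^k` lies in the factorial
language `L_H`.
-/

section Desubstitution

variable {A B : Type*} (Ψ : A → List B)

lemma extM_nil : extM Ψ [] = [] := rfl

lemma extM_cons (a : A) (u : List A) : extM Ψ (a :: u) = Ψ a ++ extM Ψ u :=
  List.flatMap_cons ..

lemma extM_reverse (u : List A) :
    extM Ψ u.reverse = (extM (fun a => (Ψ a).reverse) u).reverse :=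
  List.flatMap_reverse

lemma List.IsInfix.extM_infix {u u' : List A} (h : u <:+: u') : extM Ψ u <:+: extM Ψ u' := by
  obtain ⟨s, t, rfl⟩ := h
  exact ⟨extM Ψ s, extM Ψ t, by simp only [extM, List.flatMap_append]⟩

variable {Ψ} {C : ℕ} (hC : ∀ a, (Ψ a).length ≤ C)
include hC

lemma length_extM_le (u : List A) : (extM Ψ u).length ≤ C * u.length := by
  rw [extM, List.length_flatMap, mul_comm, ← smul_eq_mul]
  simpa using List.sum_le_card_nsmul _ _ (List.forall_mem_map.mpr fun a _ => hC a)

lemma exists_prefix_extM_prefix {m : List B} {u : List A} (hm : m <+: extM Ψ u) :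
    ∃ z, z <+: u ∧ extM Ψ z <+: m ∧ m.length ≤ (extM Ψ z).length + C := by
  induction u generalizing m with
  | nil =>
    rw [extM_nil, List.prefix_nil] at hm
    exact ⟨[], List.nil_prefix, List.nil_prefix, by simp [hm]⟩
  | cons a u ih =>
    rw [extM_cons] at hm
    by_cases hshort : m.length ≤ (Ψ a).length
    · exact ⟨[], List.nil_prefix, List.nil_prefix,
        by simpa [extM_nil] using hshort.trans (hC a)⟩
    · have hΨa : Ψ a <+: m :=
        List.prefix_of_prefix_length_le (List.prefix_append _ _) hm (by omega)
      obtain ⟨m', rfl⟩ := hΨa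
      obtain ⟨z, hzu, hzm, hlen⟩ := ih ((List.prefix_append_right_inj _).mp hm)
      refine ⟨a :: z, List.cons_prefix_cons.mpr ⟨rfl, hzu⟩, ?_, ?_⟩
      · rw [extM_cons]; exact (List.prefix_append_right_inj _).mpr hzm
      · simp only [extM_cons, List.length_append] at hlen ⊢; omega

lemma exists_suffix_extM_suffix {m : List B} {u : List A} (hm : m <:+ extM Ψ u) :
    ∃ z, z <:+ u ∧ extM Ψ z <:+ m ∧ m.length ≤ (extM Ψ z).length + C := by
  have hrev : m.reverse <+: extM (fun a => (Ψ a).reverse) u.reverse := by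
    rwa [← List.reverse_reverse (extM _ u.reverse), ← extM_reverse, List.reverse_reverse,
      List.reverse_prefix]
  obtain ⟨z, hzu, hzm, hlen⟩ :=
    exists_prefix_extM_prefix (fun a => (List.length_reverse ..).trans_le (hC a)) hrev
  refine ⟨z.reverse, ?_, ?_, ?_⟩
  · rwa [← List.reverse_prefix, List.reverse_reverse]
  · rwa [extM_reverse, ← List.reverse_prefix, List.reverse_reverse]
  · simpa [extM_reverse] using hlen

lemma exists_infix_extM_infix {t : List B} {y : List A} (ht : t <:+: extM Ψ y) :
    ∃ z, z <:+: y ∧ extM Ψ z <:+: t ∧ t.length ≤ (extM Ψ z).length + 2 * C := by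
  obtain ⟨s, hts, hsy⟩ := List.infix_iff_prefix_suffix.mp ht
  obtain ⟨z₁, hz₁y, hz₁s, hlen₁⟩ := exists_suffix_extM_suffix hC hsy
  obtain ⟨p, rfl⟩ := hz₁s
  -- `p` is the part of `s` in front of `Ψ(z₁)`
  have hdrop : t.drop p.length <+: extM Ψ z₁ := by
    simpa using hts.drop p.length
  obtain ⟨z, hzz₁, hzt, hlen⟩ := exists_prefix_extM_prefix hC hdrop
  refine ⟨z, hzz₁.isInfix.trans hz₁y.isInfix,
    hzt.isInfix.trans (List.drop_suffix _ _).isInfix, ?_⟩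
  have := hts.length_le
  simp only [List.length_drop, List.length_append] at hlen hlen₁ this
  omega

lemma exists_infix_length_eq_extM_infix {t : List B} {y : List A} (ht : t <:+: extM Ψ y)
    {K : ℕ} (hK : C * (K + 2) < t.length) :
    ∃ z, z <:+: y ∧ z.length = K ∧ extM Ψ z <:+: t := by
  obtain ⟨z, hzy, hzt, hlen⟩ := exists_infix_extM_infix hC ht
  have hKz : K < z.length := by
    have := length_extM_le hC z
    exact Nat.lt_of_mul_lt_mul_left (a := C) (by linarith)
  exact ⟨z.take K, (List.take_prefix K z).isInfix.trans hzy, by simp; omega,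
    ((List.take_prefix K z).isInfix.extM_infix Ψ).trans hzt⟩

end Desubstitution

section Languages

variable {A B : Type*}

lemma LangD0L.mem_of_infix {φ : A → List A} {w x y : List A} (hyx : y <:+: x)
    (hx : x ∈ LangD0L φ w) : y ∈ LangD0L φ w := by
  obtain ⟨n, hn⟩ := hx
  exact ⟨n, hyx.trans hn⟩

lemma factImg.mem_of_infix {Ψ : A → List B} {L : Set (List A)} {s t : List B} (hst : s <:+: t)
    (ht : t ∈ factImg Ψ L) : s ∈ factImg Ψ L := by
  obtain ⟨x, hx, htx⟩ := ht
  exact ⟨x, hx, hst.trans htx⟩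

lemma exists_forall_infix_of_unifRec [Fintype A] (Ψ : A → List B) {L : Set (List A)}
    (hL : ∀ x ∈ L, ∀ y, y <:+: x → y ∈ L) (hUR : UnifRec L) {u : List B}
    (hu : u ∈ factImg Ψ L) : ∃ N, ∀ t ∈ factImg Ψ L, N ≤ t.length → u <:+: t := by
  obtain ⟨x, hx, hux⟩ := hu
  obtain ⟨K, hK⟩ := hUR x.length
  obtain ⟨C, hC⟩ : ∃ C, ∀ a, (Ψ a).length ≤ C :=
    ⟨Finset.univ.sup fun a => (Ψ a).length,
      fun a => Finset.le_sup (f := fun a => (Ψ a).length) (Finset.mem_univ a)⟩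
  refine ⟨C * (K + 2) + 1, fun t ⟨y, hy, hty⟩ htlen => ?_⟩
  obtain ⟨z, hzy, hzK, hzt⟩ := exists_infix_length_eq_extM_infix hC hty (K := K) (by omega)
  have hxz : x <:+: z := hK z (hL y hy z hzy) hzK x hx rfl
  exact hux.trans ((hxz.extM_infix Ψ).trans hzt)

end Languages

lemma length_wpow {B : Type*} (v : List B) (k : ℕ) : (wpow v k).length = k * v.length := by
  simp [wpow]

theorem stmt1_general {A B : Type*} [Fintype A]
    (φ : A → List A) (w : List A) (Ψ : A → List B)
    (hUR : UnifRec (LangD0L φ w))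
    (v : List B) (hv : Primitive v) (hvk : ∀ k : ℕ, wpow v k ∈ LangHD0L φ w Ψ) :
    LangHD0L φ w Ψ = {u : List B | ∃ k : ℕ, u <:+: wpow v k} := by
  ext u
  constructor
  · intro hu
    obtain ⟨N, hN⟩ := exists_forall_infix_of_unifRec Ψ
      (fun x hx y hyx => LangD0L.mem_of_infix hyx hx) hUR hu
    have hvlen : 1 ≤ v.length := List.length_pos_iff.mpr hv.1
    refine ⟨N, hN _ (hvk N) ?_⟩
    rw [length_wpow]
    exact Nat.le_mul_of_pos_right N hvlen
  · rintro ⟨k, huk⟩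
    exact factImg.mem_of_infix huk (hvk k)

/-- If `L_G` is uniformly recurrent and `L_H` contains an infinite repetition
`v^ω`, then `L_H` equals the set of all factors of the periodic infinite word `v^ω`. -/
theorem stmt1 {A B : Type*} [Fintype A] [Fintype B]
    (φ : A → List A) (w : List A) (Ψ : A → List B) (hφ : NonErasing φ)
    (hUR : UnifRec (LangD0L φ w))
    (v : List B) (hv : Primitive v) (hvk : ∀ k : ℕ, wpow v k ∈ LangHD0L φ w Ψ) :
    LangHD0L φ w Ψ = {u : List B | ∃ k : ℕ, u <:+: wpow v k} :=
  stmt1_general φ w Ψ hUR v hv hvk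
end

section
/- Let G = (A, φ, w) be a D0L-system with non-erasing morphism φ, and let p > 0 and q ≥ 0 be integers such that alph(φ^i(a)) = alph(φ^{i+p}(a)) for every letter a occurring in w and every i ≥ q. For 0 ≤ i < q + p define the D0L-systems G_i = (A_i, φ^p, φ^i(w)), where A_i is the union over letters a of w of alph(φ^i(a)). Then L_G = ∪_{0≤i<q+p} L_{G_i}, and for any morphism Ψ: A* → B*, the language L_H of the HD0L-system H = (A, φ, w, Ψ) satisfies L_H = ∪_{0≤i<q+p} fact(Ψ(L_{G_i})). -/
lemma extM_append {A B : Type*} (φ : A → List B) (u v : List A) :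
    extM φ (u ++ v) = extM φ u ++ extM φ v :=
  List.flatMap_append ..

lemma iterate_extM_append {A : Type*} (φ : A → List A) (k : ℕ) (u v : List A) :
    (extM φ)^[k] (u ++ v) = (extM φ)^[k] u ++ (extM φ)^[k] v := by
  induction k generalizing u v with
  | zero => rfl
  | succ k ih => simp only [Function.iterate_succ_apply, extM_append, ih]

lemma extM_iterate_singleton {A : Type*} (φ : A → List A) (p : ℕ) :
    extM (fun a => (extM φ)^[p] [a]) = (extM φ)^[p] := by
  funext u
  induction u with
  | nil => exact (Function.iterate_fixed rfl p).symm
  | cons a u ih =>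
    rw [← List.singleton_append, extM_append, iterate_extM_append, ← ih]
    simp only [extM, List.flatMap_singleton]

lemma exists_lt_add_mul_add_eq {p : ℕ} (hp : 0 < p) (q m : ℕ) :
    ∃ i < q + p, ∃ k, p * k + i = m := by
  by_cases hm : m < q + p
  · exact ⟨m, hm, 0, by simp⟩
  · refine ⟨q + (m - q) % p, by have := Nat.mod_lt (m - q) hp; omega, (m - q) / p, ?_⟩
    have := Nat.div_add_mod (m - q) p
    omega

lemma LangD0L_eq_biUnion_iterate {A : Type*} (φ : A → List A) (w : List A) {p : ℕ}
    (hp : 0 < p) (q : ℕ) :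
    LangD0L φ w = ⋃ i ∈ Set.Iio (q + p),
      LangD0L (fun a => (extM φ)^[p] [a]) ((extM φ)^[i] w) := by
  ext v
  simp only [LangD0L, Set.mem_iUnion, Set.mem_ofPred_eq, Set.mem_Iio, extM_iterate_singleton,
    ← Function.iterate_mul, ← Function.iterate_add_apply, exists_prop]
  constructor
  · rintro ⟨m, hm⟩
    obtain ⟨i, hi, k, rfl⟩ := exists_lt_add_mul_add_eq hp q m
    exact ⟨i, hi, k, hm⟩
  · rintro ⟨i, -, k, hk⟩
    exact ⟨p * k + i, hk⟩

lemma factImg_biUnion {A B ι : Type*} (Ψ : A → List B) (S : Set ι) (L : ι → Set (List A)) :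
    factImg Ψ (⋃ i ∈ S, L i) = ⋃ i ∈ S, factImg Ψ (L i) := by
  ext v
  simp only [factImg, Set.mem_iUnion, Set.mem_ofPred_eq, exists_prop]
  constructor
  · rintro ⟨u, ⟨i, hi, hu⟩, hf⟩
    exact ⟨i, hi, u, hu, hf⟩
  · rintro ⟨i, hi, u, hu, hf⟩
    exact ⟨u, ⟨i, hi, hu⟩, hf⟩

theorem stmt4_general {A B : Type*}
    (φ : A → List A) (w : List A) (Ψ : A → List B)
    (p q : ℕ) (hp : 0 < p) :
    LangD0L φ w = ⋃ i ∈ Set.Iio (q + p),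
        LangD0L (fun a => (extM φ)^[p] [a]) ((extM φ)^[i] w) ∧
    LangHD0L φ w Ψ = ⋃ i ∈ Set.Iio (q + p),
        factImg Ψ (LangD0L (fun a => (extM φ)^[p] [a]) ((extM φ)^[i] w)) := by
  have hL := LangD0L_eq_biUnion_iterate φ w hp q
  refine ⟨hL, ?_⟩
  rw [LangHD0L, hL, factImg_biUnion]

/-- With `p > 0`, `q ≥ 0` such that `alph(φ^i(a)) = alph(φ^{i+p}(a))` for
every letter `a` of `w` and `i ≥ q`, and `G_i = (A_i, φ^p, φ^i(w))`, we have
`L_G = ⋃_{0 ≤ i < q+p} L_{G_i}` and `L_H = ⋃_{0 ≤ i < q+p} fact(Ψ(L_{G_i}))`. -/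
theorem stmt4 {A B : Type*} [Fintype A] [Fintype B]
    (φ : A → List A) (w : List A) (Ψ : A → List B) (hφ : NonErasing φ)
    (p q : ℕ) (hp : 0 < p)
    (hper : ∀ a ∈ w, ∀ i : ℕ, q ≤ i →
      alph ((extM φ)^[i] [a]) = alph ((extM φ)^[i + p] [a])) :
    LangD0L φ w = ⋃ i ∈ Set.Iio (q + p),
        LangD0L (fun a => (extM φ)^[p] [a]) ((extM φ)^[i] w) ∧
    LangHD0L φ w Ψ = ⋃ i ∈ Set.Iio (q + p),
        factImg Ψ (LangD0L (fun a => (extM φ)^[p] [a]) ((extM φ)^[i] w)) :=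
  stmt4_general φ w Ψ p q hp
end

section
/- Let G = (A, φ, w) be a pushy D0L-system with non-erasing morphism φ. Then there exist R_G ∈ ℕ and a finite set 𝒰 of non-empty words over bounded letters such that every element of L_G consisting only of bounded letters has one of the forms w₁, or w₁u₁^{k₁}w₂, or w₁u₁^{k₁}w₂u₂^{k₂}w₃, where u₁, u₂ ∈ 𝒰, |w_j| < R_G for all j ∈ {1,2,3}, and k₁, k₂ are positive integers. -/
/-- The structural property of bounded-letter factors of a pushy D0L-system from
Theorem 12 of Klouda–Starosta (2013), for a constant `R`. -/
def Thm12Prop {A : Type*} (φ : A → List A) (w : List A) (R : ℕ) : Prop :=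
  ∃ U : Set (List A), U.Finite ∧ (∀ u ∈ U, u ≠ [] ∧ ∀ a ∈ u, BddLetter φ a) ∧
    ∀ v ∈ LangD0L φ w, (∀ a ∈ v, BddLetter φ a) →
      (v.length < R) ∨
      (∃ (w₁ u₁ : List A) (k₁ : ℕ) (w₂ : List A), u₁ ∈ U ∧ 0 < k₁ ∧
        v = w₁ ++ wpow u₁ k₁ ++ w₂ ∧ w₁.length < R ∧ w₂.length < R) ∨
      (∃ (w₁ u₁ : List A) (k₁ : ℕ) (w₂ u₂ : List A) (k₂ : ℕ) (w₃ : List A),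
        u₁ ∈ U ∧ u₂ ∈ U ∧ 0 < k₁ ∧ 0 < k₂ ∧
        v = w₁ ++ wpow u₁ k₁ ++ w₂ ++ wpow u₂ k₂ ++ w₃ ∧
        w₁.length < R ∧ w₂.length < R ∧ w₃.length < R)

/-!
The lengths `|φⁿ(b)|`, `b` a bounded letter, are uniformly bounded. A nonempty bounded factor `v`
of `φⁿ(w)` is traced back to the last generation at which it is not a factor of the image of a
single letter: then `v = s φᵐ(z) p`, where `z` is a bounded word of length at most
`max |w| maxₐ |φ(a)|` (so `|φᵐ(z)|` is bounded), `s` is a bounded suffix of some `φᵐ(c)` and `p` a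
bounded prefix of some `φᵐ(d)`. It therefore suffices to show that every bounded suffix of a word
`φᵐ(c)` is short or of the form `α uᵏ β` with `|α|, |β|` bounded and `u` from a finite set;
prefixes follow by reversing `φ`.

For an unbounded letter `c` write `φ(c) = ρ e(c) τ(c)`, where `e(c)` is the last unbounded letter
of `φ(c)`. The maximal bounded suffix `Sₘ(c)` of `φᵐ(c)` satisfies
`Sₘ₊₁(c) = Sₘ(e(c)) φᵐ(τ(c))`. The sequences `n ↦ eⁿ` and `n ↦ φⁿ` restricted to bounded letters
take finitely many values and each term determines the next, so they are eventually periodic with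
a common period `P`. Unrolling the recursion `P` steps at a time from a point of the periodic part
of `e` shows that `Sₘ(c)` is a bounded word, followed by a power of one of finitely many words,
followed by a bounded word.
-/

open List Function

namespace List

variable {α β : Type*}

theorem prefix_append_cases {u v w : List α} (h : u <+: v ++ w) :
    u <+: v ∨ ∃ u', u = v ++ u' ∧ u' <+: w := by
  obtain ⟨t, ht⟩ := h
  rcases append_eq_append_iff.mp ht with ⟨a, h₁, -⟩ | ⟨c, h₁, h₂⟩
  · exact Or.inl ⟨a, h₁.symm⟩
  · exact Or.inr ⟨c, h₁, t, h₂.symm⟩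

theorem suffix_append_cases {u v w : List α} (h : u <:+ v ++ w) :
    u <:+ w ∨ ∃ u', u = u' ++ w ∧ u' <:+ v := by
  obtain ⟨t, ht⟩ := h
  rcases append_eq_append_iff.mp ht with ⟨a, h₁, h₂⟩ | ⟨c, -, h₂⟩
  · exact Or.inr ⟨a, h₂, t, h₁.symm⟩
  · exact Or.inl ⟨c, h₂.symm⟩

theorem length_flatMap_le {F : α → List β} {l : List α} {C : ℕ}
    (h : ∀ a ∈ l, (F a).length ≤ C) : (l.flatMap F).length ≤ C * l.length := by
  rw [length_flatMap, mul_comm]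
  simpa using sum_le_card_nsmul (l.map fun a => (F a).length) C (by simpa using h)

variable {p : α → Bool} {l x y s : List α}

theorem rtakeWhile_append_of_forall (h : ∀ a ∈ y, p a) :
    (x ++ y).rtakeWhile p = x.rtakeWhile p ++ y := by
  rw [rtakeWhile, reverse_append, takeWhile_append_of_pos (by simpa using h)]
  simp [rtakeWhile]

theorem rtakeWhile_append_of_exists (h : ∃ a ∈ y, ¬p a) :
    (x ++ y).rtakeWhile p = y.rtakeWhile p := by
  obtain ⟨a, ha, hpa⟩ := h
  have hlen : (y.reverse.takeWhile p).length ≠ y.reverse.length := fun hlen =>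
    hpa (takeWhile_eq_self_iff.mp ((takeWhile_prefix p).eq_of_length hlen) a (mem_reverse.mpr ha))
  rw [rtakeWhile, reverse_append, takeWhile_append, if_neg hlen, rtakeWhile]

theorem IsSuffix.suffix_rtakeWhile (hs : s <:+ l) (h : ∀ a ∈ s, p a) :
    s <:+ l.rtakeWhile p := by
  obtain ⟨t, rfl⟩ := hs
  rw [rtakeWhile_append_of_forall h]
  exact suffix_append _ _

end List

theorem exists_eventually_periodic_of_finite {β : Type*} [Finite β] (g : ℕ → β)
    (hg : ∀ i j, g i = g j → g (i + 1) = g (j + 1)) :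
    ∃ Q P, 0 < P ∧ Periodic (fun t => g (Q + t)) P := by
  obtain ⟨i, j, hne, hij⟩ := Finite.exists_ne_map_eq_of_infinite g
  wlog hlt : i < j generalizing i j
  · exact this j i hne.symm hij.symm (by omega)
  have hshift : ∀ t, g (i + t) = g (j + t) := fun t => by
    induction t with
    | zero => exact hij
    | succ t ih => exact hg _ _ ih
  refine ⟨i, j - i, by omega, fun t => ?_⟩
  show g (i + (t + (j - i))) = g (i + t)
  rw [show i + (t + (j - i)) = j + t by omega, hshift]

section Words

variable {A : Type*}

theorem wpow_zero (u : List A) : wpow u 0 = [] := rfl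

theorem wpow_succ (u : List A) (k : ℕ) : wpow u (k + 1) = u ++ wpow u k := by
  simp [wpow, replicate_succ]

theorem wpow_succ' (u : List A) (k : ℕ) : wpow u (k + 1) = wpow u k ++ u := by
  simp [wpow, replicate_succ']

theorem wpow_nil (k : ℕ) : wpow ([] : List A) k = [] := by
  simp [wpow]

theorem reverse_wpow (u : List A) (k : ℕ) : (wpow u k).reverse = wpow u.reverse k := by
  induction k with
  | zero => rfl
  | succ k ih => rw [wpow_succ, reverse_append, ih, wpow_succ']

theorem exists_eq_append_wpow_of_suffix {x u s : List A} {k : ℕ} (h : s <:+ x ++ wpow u k) :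
    ∃ α j, s = α ++ wpow u j ∧ α.length ≤ x.length + u.length := by
  induction k generalizing s with
  | zero =>
    rw [wpow_zero, append_nil] at h
    exact ⟨s, 0, by simp [wpow_zero], by have := h.length_le; omega⟩
  | succ k ih =>
    rw [wpow_succ', ← append_assoc] at h
    rcases suffix_append_cases h with h | ⟨s', rfl, hs'⟩
    · exact ⟨s, 0, by simp [wpow_zero], by have := h.length_le; omega⟩
    · obtain ⟨α, j, rfl, hα⟩ := ih hs'
      exact ⟨α, j + 1, by rw [wpow_succ', append_assoc], hα⟩

def AtMostOnePower (U : Set (List A)) (R : ℕ) (v : List A) : Prop :=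
  v.length < R ∨ ∃ u ∈ U, ∃ k, 0 < k ∧ ∃ α β, v = α ++ wpow u k ++ β ∧ α.length < R ∧ β.length < R

variable {U U' : Set (List A)} {R R' : ℕ}

theorem AtMostOnePower.mono {v : List A} (h : AtMostOnePower U R v) (hU : U ⊆ U') (hR : R ≤ R') :
    AtMostOnePower U' R' v := by
  rcases h with h | ⟨u, hu, k, hk, α, β, rfl, hα, hβ⟩
  · exact Or.inl (by omega)
  · exact Or.inr ⟨u, hU hu, k, hk, α, β, rfl, by omega, by omega⟩

theorem AtMostOnePower.reverse {v : List A} (h : AtMostOnePower U R v) :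
    AtMostOnePower (List.reverse '' U) R v.reverse := by
  rcases h with h | ⟨u, hu, k, hk, α, β, rfl, hα, hβ⟩
  · exact Or.inl (by simpa using h)
  · refine Or.inr ⟨u.reverse, ⟨u, hu, rfl⟩, k, hk, β.reverse, α.reverse, ?_, by simpa, by simpa⟩
    simp [reverse_wpow]

theorem atMostOnePower_of_suffix {x u y s : List A} {k : ℕ} (hs : s <:+ x ++ wpow u k ++ y)
    (hu : u ≠ [] → u ∈ U) (hR : x.length + u.length + y.length < R) : AtMostOnePower U R s := by
  rcases suffix_append_cases hs with hs | ⟨s', rfl, hs'⟩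
  · exact Or.inl (by have := hs.length_le; omega)
  obtain ⟨α, j, rfl, hα⟩ := exists_eq_append_wpow_of_suffix hs'
  by_cases hpow : j = 0 ∨ u = []
  · left
    rcases hpow with rfl | rfl <;> simp [wpow_zero, wpow_nil] <;> omega
  · rw [not_or] at hpow
    exact Or.inr ⟨u, hu hpow.2, j, Nat.pos_of_ne_zero hpow.1, α, y, rfl, by omega, by omega⟩

theorem AtMostOnePower.append_append {s mid p : List A} (hs : AtMostOnePower U R s)
    (hp : AtMostOnePower U R p) (hmid : mid.length < R) :
    (s ++ mid ++ p).length < 3 * R ∨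
      (∃ (w₁ u₁ : List A) (k₁ : ℕ) (w₂ : List A), u₁ ∈ U ∧ 0 < k₁ ∧
        s ++ mid ++ p = w₁ ++ wpow u₁ k₁ ++ w₂ ∧ w₁.length < 3 * R ∧ w₂.length < 3 * R) ∨
      (∃ (w₁ u₁ : List A) (k₁ : ℕ) (w₂ u₂ : List A) (k₂ : ℕ) (w₃ : List A),
        u₁ ∈ U ∧ u₂ ∈ U ∧ 0 < k₁ ∧ 0 < k₂ ∧
        s ++ mid ++ p = w₁ ++ wpow u₁ k₁ ++ w₂ ++ wpow u₂ k₂ ++ w₃ ∧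
        w₁.length < 3 * R ∧ w₂.length < 3 * R ∧ w₃.length < 3 * R) := by
  rcases hs with hs | ⟨u₁, hu₁, k₁, hk₁, α₁, β₁, rfl, hα₁, hβ₁⟩ <;>
    rcases hp with hp | ⟨u₂, hu₂, k₂, hk₂, α₂, β₂, rfl, hα₂, hβ₂⟩
  · left
    simp only [length_append]
    omega
  · refine Or.inr (Or.inl ⟨s ++ mid ++ α₂, u₂, k₂, β₂, hu₂, hk₂, by simp, ?_, by omega⟩)
    simp only [length_append]
    omega
  · refine Or.inr (Or.inl ⟨α₁, u₁, k₁, β₁ ++ mid ++ p, hu₁, hk₁, by simp, by omega, ?_⟩)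
    simp only [length_append]
    omega
  · refine Or.inr (Or.inr ⟨α₁, u₁, k₁, β₁ ++ mid ++ α₂, u₂, k₂, β₂, hu₁, hu₂, hk₁, hk₂,
      by simp, by omega, ?_, by omega⟩)
    simp only [length_append]
    omega

end Words

section Iteration

variable {A : Type*} {φ : A → List A}

def iterMorph (φ : A → List A) (n : ℕ) (a : A) : List A := (extM φ)^[n] [a]

@[simp]
theorem iterMorph_zero (a : A) : iterMorph φ 0 a = [a] := rfl

theorem iterMorph_succ' (n : ℕ) (a : A) : iterMorph φ (n + 1) a = extM φ (iterMorph φ n a) :=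
  iterate_succ_apply' _ _ _

theorem flatMap_iterMorph_zero (x : List A) : x.flatMap (iterMorph φ 0) = x :=
  flatMap_singleton' x

theorem iterate_extM (φ : A → List A) (n : ℕ) (x : List A) :
    (extM φ)^[n] x = x.flatMap (iterMorph φ n) := by
  induction n generalizing x with
  | zero => exact flatMap_iterMorph_zero x |>.symm
  | succ n ih =>
    rw [iterate_succ_apply, ih, extM, flatMap_assoc]
    congr 1
    funext a
    rw [iterMorph, iterate_succ_apply, ih]
    simp [extM]

theorem iterMorph_succ (n : ℕ) (a : A) : iterMorph φ (n + 1) a = (φ a).flatMap (iterMorph φ n) := by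
  rw [iterMorph, iterate_succ_apply, iterate_extM]
  simp [extM]

theorem iterMorph_add (m n : ℕ) (a : A) :
    iterMorph φ (m + n) a = (iterMorph φ n a).flatMap (iterMorph φ m) := by
  rw [iterMorph, iterate_add_apply, ← iterate_extM]
  rfl

theorem BddLetter.of_mem_iterMorph {b c : A} {n : ℕ} (hb : BddLetter φ b)
    (hc : c ∈ iterMorph φ n b) : BddLetter φ c := by
  obtain ⟨C, hC⟩ := hb
  refine ⟨C, fun m => le_trans ?_ (hC (m + n))⟩
  change (iterMorph φ m c).length ≤ (iterMorph φ (m + n) b).length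
  rw [iterMorph_add]
  exact (infix_flatMap_of_mem hc _).length_le

theorem exists_length_iterMorph_le_of_bdd [Finite A] (φ : A → List A) :
    ∃ C, ∀ b, BddLetter φ b → ∀ n, (iterMorph φ n b).length ≤ C := by
  choose K hK using fun b : {b // BddLetter φ b} => b.2
  obtain ⟨C, hC⟩ := Finite.exists_le K
  exact ⟨C, fun b hb n => (hK ⟨b, hb⟩ n).trans (hC _)⟩

theorem BddLetter.of_forall_mem_iterMorph [Finite A] {a : A} {n : ℕ}
    (h : ∀ c ∈ iterMorph φ n a, BddLetter φ c) : BddLetter φ a := by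
  obtain ⟨C, hC⟩ := exists_length_iterMorph_le_of_bdd φ
  refine ⟨(Finset.range n).sup (fun k => (iterMorph φ k a).length) + C * (iterMorph φ n a).length,
    fun m => ?_⟩
  change (iterMorph φ m a).length ≤ _
  rcases lt_or_ge m n with hm | hm
  · have := Finset.le_sup (f := fun k => (iterMorph φ k a).length) (Finset.mem_range.mpr hm)
    omega
  · obtain ⟨k, rfl⟩ := Nat.exists_eq_add_of_le' hm
    rw [iterMorph_add]
    have := length_flatMap_le fun c hc => hC c (h c hc) k
    omega

theorem exists_not_bddLetter_mem_iterMorph [Finite A] {a : A} (ha : ¬BddLetter φ a) (n : ℕ) :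
    ∃ c ∈ iterMorph φ n a, ¬BddLetter φ c := by
  by_contra! h
  exact ha (BddLetter.of_forall_mem_iterMorph h)

end Iteration

section Decomposition

variable {A B : Type*}

theorem exists_eq_flatMap_append_of_prefix {F : A → List B} {x : List A} {p : List B}
    (h : p <+: x.flatMap F) :
    ∃ z p', z <+: x ∧ p = z.flatMap F ++ p' ∧ (p' = [] ∨ ∃ d, p' <+: F d) := by
  induction x generalizing p with
  | nil => exact ⟨[], p, nil_prefix, by simp, Or.inl (by simpa using h)⟩
  | cons a x ih =>
    rw [flatMap_cons] at h
    rcases prefix_append_cases h with h | ⟨p₂, rfl, hp₂⟩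
    · exact ⟨[], p, nil_prefix, by simp, Or.inr ⟨a, h⟩⟩
    · obtain ⟨z, p', hz, rfl, hp'⟩ := ih hp₂
      exact ⟨a :: z, p', cons_prefix_cons.mpr ⟨rfl, hz⟩, by simp, hp'⟩

theorem infix_flatMap_cases (F : A → List B) {x : List A} {v : List B}
    (hv : v <:+: x.flatMap F) (hne : v ≠ []) :
    (∃ c, v <:+: F c) ∨ ∃ (c d : A) (z : List A) (s p : List B),
      z.length ≤ x.length ∧ s <:+ F c ∧ p <+: F d ∧ v = s ++ z.flatMap F ++ p := by
  induction x with
  | nil => exact (hne (eq_nil_of_infix_nil hv)).elim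
  | cons a x ih =>
    rw [flatMap_cons] at hv
    rcases infix_append_iff.mp hv with hv | hv | ⟨s, p, rfl, hs, hp⟩
    · exact Or.inl ⟨a, hv⟩
    · refine (ih hv).imp id fun ⟨c, d, z, s, p, hz, hs, hp, hve⟩ => ?_
      exact ⟨c, d, z, s, p, hz.trans (by simp), hs, hp, hve⟩
    · obtain ⟨z, p', hz, rfl, hp'⟩ := exists_eq_flatMap_append_of_prefix hp
      have hzlen : z.length ≤ (a :: x).length := hz.length_le.trans (by simp)
      rcases hp' with rfl | ⟨d, hd⟩
      · exact Or.inr ⟨a, a, z, s, [], hzlen, hs, nil_prefix, by simp⟩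
      · exact Or.inr ⟨a, d, z, s, p', hzlen, hs, hd, by simp⟩

variable {φ : A → List A}

/-- The letters of `z` are those whose `φᵐ`-images lie entirely inside `v`, hence bounded. -/
theorem exists_decomposition_of_infix [Finite A] {M : ℕ} (hM : ∀ a, (φ a).length ≤ M) (n : ℕ)
    {x v : List A} (hv : v <:+: x.flatMap (iterMorph φ n)) (hne : v ≠ [])
    (hvb : ∀ a ∈ v, BddLetter φ a) :
    ∃ (m : ℕ) (c d : A) (z s p : List A), z.length ≤ max x.length M ∧
      (∀ a ∈ z, BddLetter φ a) ∧ s <:+ iterMorph φ m c ∧ p <+: iterMorph φ m d ∧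
      v = s ++ z.flatMap (iterMorph φ m) ++ p := by
  induction n generalizing x with
  | zero =>
    obtain ⟨a, v', rfl⟩ := exists_cons_of_ne_nil hne
    refine ⟨0, a, a, a :: v', [], [], ?_, hvb, nil_suffix, nil_prefix,
      by simp [flatMap_iterMorph_zero]⟩
    have := hv.length_le
    rw [flatMap_iterMorph_zero] at this
    omega
  | succ n ih =>
    rcases infix_flatMap_cases _ hv hne with ⟨c, hc⟩ | ⟨c, d, z, s, p, hz, hs, hp, rfl⟩
    · rw [iterMorph_succ] at hc
      obtain ⟨m, c', d', z, s, p, hz, hzb, hs, hp, hve⟩ := ih hc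
      have hφc : max (φ c).length M ≤ max x.length M := by
        have := hM c
        omega
      exact ⟨m, c', d', z, s, p, hz.trans hφc, hzb, hs, hp, hve⟩
    · refine ⟨n + 1, c, d, z, s, p, hz.trans le_sup_left, fun a ha => ?_, hs, hp, rfl⟩
      exact BddLetter.of_forall_mem_iterMorph fun b hb =>
        hvb b (by simp only [mem_append, mem_flatMap]; exact Or.inl (Or.inr ⟨a, ha, hb⟩))

end Decomposition

section BoundedSuffix

variable {A : Type*} {φ : A → List A}

open Classical in
noncomputable def bddSuffix (φ : A → List A) (l : List A) : List A :=
  l.rtakeWhile fun a => decide (BddLetter φ a)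

open Classical in
noncomputable def lastUnbdd (φ : A → List A) (c : A) : A :=
  ((φ c).rdropWhile fun a => decide (BddLetter φ a)).getLastD c

theorem bddSuffix_suffix (l : List A) : bddSuffix φ l <:+ l := rtakeWhile_suffix _ _

theorem BddLetter.of_mem_bddSuffix {l : List A} {a : A} (ha : a ∈ bddSuffix φ l) :
    BddLetter φ a := by
  simpa using mem_rtakeWhile_imp ha

theorem List.IsSuffix.suffix_bddSuffix {s l : List A} (hs : s <:+ l) (h : ∀ a ∈ s, BddLetter φ a) :
    s <:+ bddSuffix φ l :=
  hs.suffix_rtakeWhile (by simpa using h)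

theorem bddSuffix_append_of_bdd {x y : List A} (h : ∀ a ∈ y, BddLetter φ a) :
    bddSuffix φ (x ++ y) = bddSuffix φ x ++ y :=
  rtakeWhile_append_of_forall (by simpa using h)

theorem bddSuffix_append_of_not_bdd {x y : List A} (h : ∃ a ∈ y, ¬BddLetter φ a) :
    bddSuffix φ (x ++ y) = bddSuffix φ y :=
  rtakeWhile_append_of_exists (by simpa using h)

theorem bddSuffix_singleton_of_not_bdd {c : A} (hc : ¬BddLetter φ c) : bddSuffix φ [c] = [] := by
  rw [bddSuffix, ← nil_append [c], rtakeWhile_concat_neg]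
  simpa using hc

theorem lastUnbdd_spec [Finite A] {c : A} (hc : ¬BddLetter φ c) :
    ¬BddLetter φ (lastUnbdd φ c) ∧ ∃ ρ, φ c = ρ ++ lastUnbdd φ c :: bddSuffix φ (φ c) := by
  classical
  set l := (φ c).rdropWhile fun a => decide (BddLetter φ a)
  have hl : l ≠ [] := by
    obtain ⟨a, ha, hna⟩ := exists_not_bddLetter_mem_iterMorph hc 1
    rw [iterMorph_succ, flatMap_iterMorph_zero] at ha
    simpa [l, rdropWhile_eq_nil_iff] using ⟨a, ha, hna⟩
  have hlast : lastUnbdd φ c = l.getLast hl := by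
    simp [lastUnbdd, l, getLast?_eq_some_getLast hl]
  refine ⟨by simpa [hlast] using rdropWhile_last_not _ _ hl, l.dropLast, ?_⟩
  rw [hlast, ← singleton_append, ← append_assoc, dropLast_append_getLast, bddSuffix]
  exact rdropWhile_append_rtakeWhile.symm

theorem not_bddLetter_iterate_lastUnbdd [Finite A] {c : A} (hc : ¬BddLetter φ c) (t : ℕ) :
    ¬BddLetter φ ((lastUnbdd φ)^[t] c) := by
  induction t with
  | zero => exact hc
  | succ t ih => exact iterate_succ_apply' (lastUnbdd φ) t c ▸ (lastUnbdd_spec ih).1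

theorem bddSuffix_iterMorph_succ [Finite A] {c : A} (hc : ¬BddLetter φ c) (n : ℕ) :
    bddSuffix φ (iterMorph φ (n + 1) c) =
      bddSuffix φ (iterMorph φ n (lastUnbdd φ c)) ++
        (bddSuffix φ (φ c)).flatMap (iterMorph φ n) := by
  obtain ⟨he, ρ, hρ⟩ := lastUnbdd_spec hc
  have hτ : ∀ a ∈ (bddSuffix φ (φ c)).flatMap (iterMorph φ n), BddLetter φ a := by
    simp only [mem_flatMap]
    rintro a ⟨b, hb, hab⟩
    exact (BddLetter.of_mem_bddSuffix hb).of_mem_iterMorph hab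
  conv_lhs => rw [iterMorph_succ, hρ, flatMap_append, flatMap_cons, ← append_assoc]
  rw [bddSuffix_append_of_bdd hτ,
    bddSuffix_append_of_not_bdd (exists_not_bddLetter_mem_iterMorph he n)]

/-- `φᵐ(τ(eᵗ⁻¹(c))) ⋯ φᵐ⁺ᵗ⁻²(τ(e(c))) φᵐ⁺ᵗ⁻¹(τ(c))` with `e = lastUnbdd φ` and
`τ(c) = bddSuffix φ (φ c)`: the part of the bounded suffix of `φᵐ⁺ᵗ(c)` produced in the last
`t` steps. -/
noncomputable def bddTail (φ : A → List A) (m : ℕ) : ℕ → A → List A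
  | 0, _ => []
  | t + 1, c => bddTail φ m t (lastUnbdd φ c) ++ (bddSuffix φ (φ c)).flatMap (iterMorph φ (m + t))

theorem bddSuffix_iterMorph_add [Finite A] (m t : ℕ) {c : A} (hc : ¬BddLetter φ c) :
    bddSuffix φ (iterMorph φ (m + t) c) =
      bddSuffix φ (iterMorph φ m ((lastUnbdd φ)^[t] c)) ++ bddTail φ m t c := by
  induction t generalizing c with
  | zero => simp [bddTail]
  | succ t ih =>
    rw [← add_assoc, bddSuffix_iterMorph_succ hc, ih (lastUnbdd_spec hc).1, iterate_succ_apply,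
      bddTail, append_assoc]

theorem bddSuffix_iterMorph_eq_bddTail [Finite A] (t : ℕ) {c : A} (hc : ¬BddLetter φ c) :
    bddSuffix φ (iterMorph φ t c) = bddTail φ 0 t c := by
  simpa [bddSuffix_singleton_of_not_bdd (not_bddLetter_iterate_lastUnbdd hc t)] using
    bddSuffix_iterMorph_add 0 t hc

theorem BddLetter.of_mem_bddTail {m t : ℕ} {c a : A} (ha : a ∈ bddTail φ m t c) :
    BddLetter φ a := by
  induction t generalizing c with
  | zero => simp [bddTail] at ha
  | succ t ih =>
    simp only [bddTail, mem_append, mem_flatMap] at ha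
    rcases ha with ha | ⟨b, hb, hab⟩
    · exact ih ha
    · exact (BddLetter.of_mem_bddSuffix hb).of_mem_iterMorph hab

theorem length_bddTail_le {C M : ℕ} (hC : ∀ b, BddLetter φ b → ∀ n, (iterMorph φ n b).length ≤ C)
    (hM : ∀ a, (φ a).length ≤ M) (m t : ℕ) (c : A) :
    (bddTail φ m t c).length ≤ t * (C * M) := by
  induction t generalizing c with
  | zero => simp [bddTail]
  | succ t ih =>
    have hlast : ((bddSuffix φ (φ c)).flatMap (iterMorph φ (m + t))).length ≤ C * M :=
      (length_flatMap_le fun b hb => hC b (.of_mem_bddSuffix hb) _).trans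
        (Nat.mul_le_mul_left _ (((bddSuffix_suffix _).length_le).trans (hM c)))
    rw [bddTail, length_append, add_mul, one_mul]
    exact add_le_add (ih _) hlast

theorem bddTail_congr {m m' : ℕ}
    (h : ∀ b, BddLetter φ b → ∀ i, iterMorph φ (m' + i) b = iterMorph φ (m + i) b) (t : ℕ) (c : A) :
    bddTail φ m' t c = bddTail φ m t c := by
  induction t generalizing c with
  | zero => rfl
  | succ t ih =>
    rw [bddTail, bddTail, ih]
    congr 1
    refine flatMap_congr fun b hb => h b (.of_mem_bddSuffix hb) t

theorem bddSuffix_iterMorph_add_mul [Finite A] {m P : ℕ} {d : A} (hd : ¬BddLetter φ d)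
    (hPd : (lastUnbdd φ)^[P] d = d)
    (hper : ∀ b, BddLetter φ b → ∀ k n, m ≤ n → iterMorph φ (n + k * P) b = iterMorph φ n b)
    (k : ℕ) :
    bddSuffix φ (iterMorph φ (m + k * P) d) =
      bddSuffix φ (iterMorph φ m d) ++ wpow (bddTail φ m P d) k := by
  induction k with
  | zero => simp [wpow_zero]
  | succ k ih =>
    have hcongr : bddTail φ (m + k * P) P d = bddTail φ m P d :=
      bddTail_congr (fun b hb i => by
        rw [add_right_comm]
        exact hper b hb k _ (by omega)) P d
    rw [add_mul, one_mul, ← add_assoc, bddSuffix_iterMorph_add _ _ hd, hPd, ih, hcongr,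
      wpow_succ', append_assoc]

end BoundedSuffix

section Structure

variable {A : Type*} {φ : A → List A}

theorem exists_periodic_lastUnbdd_iterMorph [Finite A] (φ : A → List A) :
    ∃ Q P, 0 < P ∧ (∀ c, (lastUnbdd φ)^[P] ((lastUnbdd φ)^[Q] c) = (lastUnbdd φ)^[Q] c) ∧
      ∀ b, BddLetter φ b → ∀ k n, Q ≤ n → iterMorph φ (n + k * P) b = iterMorph φ n b := by
  obtain ⟨C, hC⟩ := exists_length_iterMorph_le_of_bdd φ
  have : Finite {l : List A // l.length ≤ C} := (List.finite_length_le A C).to_subtype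
  let g : ℕ → (A → A) × ({b // BddLetter φ b} → {l : List A // l.length ≤ C}) :=
    fun n => ((lastUnbdd φ)^[n], fun b => ⟨iterMorph φ n b, hC b b.2 n⟩)
  obtain ⟨Q, P, hP, hper⟩ := exists_eventually_periodic_of_finite g fun i j hij => by
    simp only [g, Prod.mk.injEq, funext_iff, Subtype.ext_iff] at hij ⊢
    exact ⟨fun c => by rw [iterate_succ_apply', iterate_succ_apply', hij.1],
      fun b => by rw [iterMorph_succ', iterMorph_succ', hij.2 b]⟩
  refine ⟨Q, P, hP, fun c => ?_, fun b hb k n hn => ?_⟩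
  · have := congrFun (congrArg Prod.fst (hper 0)) c
    simp only [g] at this
    rwa [← iterate_add_apply, add_comm, ← zero_add P]
  · obtain ⟨r, rfl⟩ := Nat.exists_eq_add_of_le hn
    have := congrArg (fun x => (x.2 ⟨b, hb⟩).1) (hper.nat_mul k r)
    simpa [g, add_assoc] using this

theorem exists_suffix_atMostOnePower [Finite A] (φ : A → List A) :
    ∃ (R : ℕ) (U : Set (List A)), U.Finite ∧ (∀ u ∈ U, u ≠ [] ∧ ∀ a ∈ u, BddLetter φ a) ∧
      ∀ m c s, s <:+ iterMorph φ m c → (∀ a ∈ s, BddLetter φ a) → AtMostOnePower U R s := by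
  obtain ⟨C, hC⟩ := exists_length_iterMorph_le_of_bdd φ
  obtain ⟨M, hM⟩ := Finite.exists_le fun a => (φ a).length
  obtain ⟨Q, P, hP, he, hφ⟩ := exists_periodic_lastUnbdd_iterMorph φ
  set e := lastUnbdd φ
  refine ⟨2 * (Q + P) * (C * M) + C + 1,
    (Set.range fun rd : Fin P × A => bddTail φ (Q + rd.1) P (e^[Q] rd.2)) \ {[]},
    (Set.finite_range _).sdiff, ?_, ?_⟩
  · rintro u ⟨⟨rd, rfl⟩, hu⟩
    exact ⟨hu, fun a ha => .of_mem_bddTail ha⟩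
  intro m c s hs hsb
  by_cases hc : BddLetter φ c
  · exact Or.inl (by have := hs.length_le.trans (hC c hc m); omega)
  have hsS := hs.suffix_bddSuffix hsb
  by_cases hm : m < 2 * Q
  · left
    have h₁ := hsS.length_le
    rw [bddSuffix_iterMorph_eq_bddTail m hc] at h₁
    have h₂ := length_bddTail_le hC hM 0 m c
    have h₃ := Nat.mul_le_mul_right (C * M) hm.le
    nlinarith
  obtain ⟨r, k, hr, rfl⟩ : ∃ r k, r < P ∧ m = Q + r + k * P + Q :=
    ⟨(m - 2 * Q) % P, (m - 2 * Q) / P, Nat.mod_lt _ hP, by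
      have := Nat.div_add_mod' (m - 2 * Q) P
      omega⟩
  -- `Q` steps lead to `d = e^[Q] c`, a fixed point of `e^[P]`; from `d` the recursion repeats
  -- with period `P`.
  have hd := not_bddLetter_iterate_lastUnbdd hc Q
  rw [bddSuffix_iterMorph_add _ _ hc,
    bddSuffix_iterMorph_add_mul hd (he c) (fun b hb k n hn => hφ b hb k n (by omega))] at hsS
  refine atMostOnePower_of_suffix hsS (fun hu => ⟨⟨(⟨r, hr⟩, c), rfl⟩, hu⟩) ?_
  have h₁ := length_bddTail_le hC hM 0 (Q + r) (e^[Q] c)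
  rw [← bddSuffix_iterMorph_eq_bddTail _ hd] at h₁
  have h₂ := length_bddTail_le hC hM (Q + r) P (e^[Q] c)
  have h₃ := length_bddTail_le hC hM (Q + r + k * P) Q c
  nlinarith

theorem iterMorph_reverse (n : ℕ) (a : A) :
    iterMorph (fun a => (φ a).reverse) n a = (iterMorph φ n a).reverse := by
  induction n generalizing a with
  | zero => rfl
  | succ n ih =>
    rw [iterMorph_succ, iterMorph_succ, reverse_flatMap]
    exact congrArg (fun f => (φ a).reverse.flatMap f) (funext ih)

theorem bddLetter_reverse_iff {b : A} :
    BddLetter (fun a => (φ a).reverse) b ↔ BddLetter φ b := by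
  change (∃ C, ∀ n, (iterMorph _ n b).length ≤ C) ↔ ∃ C, ∀ n, (iterMorph φ n b).length ≤ C
  simp [iterMorph_reverse]

theorem exists_prefix_atMostOnePower [Finite A] (φ : A → List A) :
    ∃ (R : ℕ) (U : Set (List A)), U.Finite ∧ (∀ u ∈ U, u ≠ [] ∧ ∀ a ∈ u, BddLetter φ a) ∧
      ∀ m d p, p <+: iterMorph φ m d → (∀ a ∈ p, BddLetter φ a) → AtMostOnePower U R p := by
  obtain ⟨R, U, hU, hUb, hsuf⟩ := exists_suffix_atMostOnePower fun a => (φ a).reverse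
  refine ⟨R, reverse '' U, hU.image _, ?_, fun m d p hp hpb => ?_⟩
  · rintro _ ⟨u, hu, rfl⟩
    exact ⟨by simpa using (hUb u hu).1,
      fun a ha => bddLetter_reverse_iff.mp ((hUb u hu).2 a (mem_reverse.mp ha))⟩
  · have hrev : p.reverse <:+ iterMorph (fun a => (φ a).reverse) m d := by
      rw [iterMorph_reverse]
      exact reverse_suffix.mpr hp
    have hrevb : ∀ a ∈ p.reverse, BddLetter (fun a => (φ a).reverse) a :=
      fun a ha => bddLetter_reverse_iff.mpr (hpb a (mem_reverse.mp ha))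
    simpa using (hsuf m d _ hrev hrevb).reverse

end Structure

theorem stmt14_general {A : Type*} [Fintype A] (φ : A → List A) (w : List A) :
    ∃ R : ℕ, Thm12Prop φ w R := by
  obtain ⟨C, hC⟩ := exists_length_iterMorph_le_of_bdd φ
  obtain ⟨M, hM⟩ := Finite.exists_le fun a => (φ a).length
  obtain ⟨R₁, U₁, hU₁, hU₁b, hsuf⟩ := exists_suffix_atMostOnePower φ
  obtain ⟨R₂, U₂, hU₂, hU₂b, hpre⟩ := exists_prefix_atMostOnePower φ
  set R := R₁ + R₂ + C * max w.length M + 1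
  refine ⟨3 * R, U₁ ∪ U₂, hU₁.union hU₂, fun u hu => hu.elim (hU₁b u) (hU₂b u), ?_⟩
  rintro v ⟨n, hn⟩ hvb
  rcases eq_or_ne v [] with rfl | hne
  · exact Or.inl (by simp; omega)
  rw [iterate_extM] at hn
  obtain ⟨m, c, d, z, s, p, hz, hzb, hs, hp, rfl⟩ := exists_decomposition_of_infix hM n hn hne hvb
  apply AtMostOnePower.append_append
  · exact (hsuf m c s hs fun a ha => hvb a (by simp [ha])).mono Set.subset_union_left (by omega)
  · exact (hpre m d p hp fun a ha => hvb a (by simp [ha])).mono Set.subset_union_right (by omega)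
  · calc (z.flatMap (iterMorph φ m)).length ≤ C * z.length :=
          length_flatMap_le fun a ha => hC a (hzb a ha) m
      _ ≤ C * max w.length M := Nat.mul_le_mul_left C hz
      _ < R := by omega

/-- (Theorem 12 of Klouda–Starosta 2013.) For a pushy D0L-system there exist
`R_G ∈ ℕ` and a finite set `𝒰` of non-empty words over bounded letters such that every
bounded-letter element of `L_G` is of the form `w₁`, `w₁u₁^{k₁}w₂` or `w₁u₁^{k₁}w₂u₂^{k₂}w₃`
with `u₁, u₂ ∈ 𝒰`, `|w_j| < R_G` and `k₁, k₂ ≥ 1`. -/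
theorem stmt14 {A : Type*} [Fintype A] (φ : A → List A) (w : List A) (hφ : NonErasing φ)
    (hpushy : Pushy φ w) :
    ∃ R : ℕ, Thm12Prop φ w R :=
  stmt14_general φ w
end
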